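/- In the forcing P^c_ff, the union of the domains of any countable descending sequence of conditions, together with the union of the functions themselves, again forms a condition; more precisely, if ⟨p_n : n < ω⟩ is a descending sequence in P^c_ff, then p = ⋃_n p_n is a function satisfying the three defining properties of a condition, hence is the greatest lower bound of the sequence. -/
import Mathlib


open Cardinal Set

def S21 (δ : Ordinal) : Prop := δ < (aleph 2).ord ∧ Ordinal.cof δ = aleph 1

def IsCond (p : Set (Ordinal × Ordinal)) : Prop :=
  (∀ x ∈ p, S21 x.1) ∧
  (∀ x ∈ p, x.2 < (aleph 2).ord) ∧
  (∀ x ∈ p, ∀ y ∈ p, x.1 = y.1 → x.2 = y.2) ∧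
  (Prod.fst '' p).Countable ∧
  (∀ x ∈ p, x.1 ≤ x.2) ∧
  (∀ x ∈ p, ∀ y ∈ p, x.1 < y.1 → x.2 < y.1)

lemma pmono (p : ℕ → Set (Ordinal × Ordinal)) (hdesc : ∀ n, p n ⊆ p (n + 1)) :
    Monotone p := monotone_nat_of_le_succ hdesc

/-- For a descending sequence in `P^c_ff`, the union of the conditions is again a
condition, and is the greatest lower bound of the sequence. -/
theorem stmt7 (p : ℕ → Set (Ordinal × Ordinal))
    (hc : ∀ n, IsCond (p n)) (hdesc : ∀ n, p n ⊆ p (n + 1)) :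
    IsCond (⋃ n, p n) ∧ (∀ n, p n ⊆ ⋃ m, p m) ∧
      ∀ r, IsCond r → (∀ n, p n ⊆ r) → (⋃ n, p n) ⊆ r := by
  have hmono := pmono p hdesc
  refine ⟨⟨?_, ?_, ?_, ?_, ?_, ?_⟩, fun n => subset_iUnion p n, fun r _ hr => iUnion_subset hr⟩
  · rintro x hx
    obtain ⟨n, hn⟩ := mem_iUnion.1 hx
    exact (hc n).1 x hn
  · rintro x hx
    obtain ⟨n, hn⟩ := mem_iUnion.1 hx
    exact (hc n).2.1 x hn
  · rintro x hx y hy h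
    obtain ⟨n, hn⟩ := mem_iUnion.1 hx
    obtain ⟨m, hm⟩ := mem_iUnion.1 hy
    exact (hc (max n m)).2.2.1 x (hmono (le_max_left n m) hn) y
      (hmono (le_max_right n m) hm) h
  · rw [image_iUnion]
    exact countable_iUnion fun n => (hc n).2.2.2.1
  · rintro x hx
    obtain ⟨n, hn⟩ := mem_iUnion.1 hx
    exact (hc n).2.2.2.2.1 x hn
  · rintro x hx y hy h
    obtain ⟨n, hn⟩ := mem_iUnion.1 hx
    obtain ⟨m, hm⟩ := mem_iUnion.1 hy
    exact (hc (max n m)).2.2.2.2.2 x (hmono (le_max_left n m) hn) y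
      (hmono (le_max_right n m) hm) h
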